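/- Let T* be the star tree on X, where |X| = n ≥ 3. A subset L of binom(X,2) with X = ∪_{c∈L} c is an edge-weight lasso for T* if and only if L is strongly non-bipartite (i.e. no connected component of the graph Γ(L) = (X, L) is bipartite). -/

import Mathlib

/- Common definitions for formalizing results of Dress, Huber & Steel,
   "Lassoing a phylogenetic tree I: Basic properties, shellings, and covers".

   Trees are modelled as simple graphs on an ambient vertex type `U`;
   the vertex set of the tree is the support of the graph (every vertex of a
   tree with at least two vertices has degree >= 1). -/

noncomputable section
open scoped Classical

namespace Lasso

variable {U : Type}

/-- The degree of a vertex. -/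
def deg (G : SimpleGraph U) (v : U) : ℕ := (G.neighborSet v).ncard

/-- A leaf is a vertex of degree `1`. -/
def IsLeaf (G : SimpleGraph U) (v : U) : Prop := deg G v = 1

/-- An interior vertex: a non-leaf vertex of the tree. -/
def Interior (G : SimpleGraph U) (v : U) : Prop := v ∈ G.support ∧ ¬ IsLeaf G v

/-- `G` is an `X`-tree: a finite tree without vertices of degree two whose
    leaf set is exactly `X`. -/
structure IsXTree (X : Set U) (G : SimpleGraph U) : Prop where
  support_finite : G.support.Finite
  support_nonempty : G.support.Nonempty
  connected : ∀ a ∈ G.support, ∀ b ∈ G.support, G.Reachable a b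
  acyclic : G.IsAcyclic
  no_deg_two : ∀ v : U, deg G v ≠ 2
  leaves_eq : X = {v : U | IsLeaf G v}

/-- An edge weighting of `G`: nonnegative, and zero away from the edges of `G`
    (so that it represents an element of `ℝ_{≥0}^E`). -/
structure IsWeighting (G : SimpleGraph U) (ω : Sym2 U → ℝ) : Prop where
  nonneg : ∀ e, 0 ≤ ω e
  zero_off : ∀ e, e ∉ G.edgeSet → ω e = 0

/-- A proper edge weighting: in addition strictly positive on interior edges
    (edges both of whose endpoints are non-leaves). -/
structure IsProperWeighting (G : SimpleGraph U) (ω : Sym2 U → ℝ)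
    extends IsWeighting G ω : Prop where
  interior_pos : ∀ e ∈ G.edgeSet, (∀ u ∈ e, ¬ IsLeaf G u) → 0 < ω e

/-- The set `E_T(x|y)` of edges separating `x` from `y`, i.e. the edges lying
    on every walk from `x` to `y` (in a tree: the edges of the path). -/
def pathEdges (G : SimpleGraph U) (x y : U) : Set (Sym2 U) :=
  {e | e ∈ G.edgeSet ∧ ∀ p : G.Walk x y, e ∈ p.edges}

/-- The induced distance `D_ω(x,y)`. -/
def tdist (G : SimpleGraph U) (ω : Sym2 U → ℝ) (x y : U) : ℝ :=
  ∑ᶠ e ∈ pathEdges G x y, ω e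

/-- Path edge set of an unordered pair. -/
def pairPathEdges (G : SimpleGraph U) (c : Sym2 U) : Set (Sym2 U) :=
  {e | e ∈ G.edgeSet ∧ ∀ x y : U, c = s(x, y) → ∀ p : G.Walk x y, e ∈ p.edges}

/-- `D_ω` on an unordered pair (a cord); `λ^T_c(ω)`. -/
def pdist (G : SimpleGraph U) (ω : Sym2 U → ℝ) (c : Sym2 U) : ℝ :=
  ∑ᶠ e ∈ pairPathEdges G c, ω e

/-- `(G,ω)` and `(G',ω')` are `L`-isometric. -/
def LIso (L : Set (Sym2 U)) (G : SimpleGraph U) (ω : Sym2 U → ℝ)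
    (G' : SimpleGraph U) (ω' : Sym2 U → ℝ) : Prop :=
  ∀ x y : U, s(x, y) ∈ L → tdist G ω x y = tdist G' ω' x y

/-- `L` is a set of cords of `X`: 2-element subsets of `X`. -/
def IsCordSet (X : Set U) (L : Set (Sym2 U)) : Prop :=
  ∀ c ∈ L, ¬ c.IsDiag ∧ ∀ u ∈ c, u ∈ X

/-- The union of all cords in `L`. -/
def cup (L : Set (Sym2 U)) : Set U := {v | ∃ c ∈ L, v ∈ c}

/-- `L` is an edge-weight lasso for `G`. -/
def EdgeWeightLasso (G : SimpleGraph U) (L : Set (Sym2 U)) : Prop :=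
  ∀ ω ω' : Sym2 U → ℝ, IsProperWeighting G ω → IsProperWeighting G ω' →
    LIso L G ω G ω' → ω = ω'

/-- `G ≃ G'` via a graph isomorphism fixing `X` pointwise. -/
def FixingIso (X : Set U) (G G' : SimpleGraph U) : Prop :=
  ∃ φ : G ≃g G', ∀ x ∈ X, φ x = x

/-- `(G,ω)` and `(G',ω')` are isometric: a graph isomorphism fixing `X`
    pointwise and preserving edge weights. -/
def FixingIsometry (X : Set U) (G G' : SimpleGraph U) (ω ω' : Sym2 U → ℝ) : Prop :=
  ∃ φ : G ≃g G', (∀ x ∈ X, φ x = x) ∧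
    ∀ e ∈ G.edgeSet, ω' (Sym2.map (fun u => φ u) e) = ω e

/-- `L` is a topological lasso for the `X`-tree `G`. -/
def TopologicalLasso (X : Set U) (G : SimpleGraph U) (L : Set (Sym2 U)) : Prop :=
  ∀ G' : SimpleGraph U, IsXTree X G' →
    ∀ ω ω' : Sym2 U → ℝ, IsProperWeighting G ω → IsProperWeighting G' ω' →
      LIso L G ω G' ω' → FixingIso X G G'

/-- `L` is a strong lasso for the `X`-tree `G`. -/
def StrongLasso (X : Set U) (G : SimpleGraph U) (L : Set (Sym2 U)) : Prop :=
  ∀ G' : SimpleGraph U, IsXTree X G' →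
    ∀ ω ω' : Sym2 U → ℝ, IsProperWeighting G ω → IsProperWeighting G' ω' →
      LIso L G ω G' ω' → FixingIsometry X G G' ω ω'

/-- `G` displays the quartet `a a' ‖ b b'`: some edge lies on all four paths
    joining `a` or `a'` to `b` or `b'`. -/
def DisplaysQ (G : SimpleGraph U) (a a' b b' : U) : Prop :=
  ∃ e : Sym2 U, e ∈ pathEdges G a b ∧ e ∈ pathEdges G a b' ∧
    e ∈ pathEdges G a' b ∧ e ∈ pathEdges G a' b'

def Distinct4 (a b c d : U) : Prop :=
  a ≠ b ∧ a ≠ c ∧ a ≠ d ∧ b ≠ c ∧ b ≠ d ∧ c ≠ d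

/-- `a a' ‖ b b' ∈ Q(G)`: a quartet on four distinct elements of `X`
    displayed by `G`. -/
def QuartetOf (X : Set U) (G : SimpleGraph U) (a a' b b' : U) : Prop :=
  a ∈ X ∧ a' ∈ X ∧ b ∈ X ∧ b' ∈ X ∧ Distinct4 a a' b b' ∧ DisplaysQ G a a' b b'

/-- `G` displays `a a' | b b'`: it displays neither `a b ‖ a' b'` nor
    `a b' ‖ a' b`. -/
def DisplaysBar (G : SimpleGraph U) (a a' b b' : U) : Prop :=
  ¬ DisplaysQ G a b a' b' ∧ ¬ DisplaysQ G a b' a' b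

/-- `A, B` is a virtual `T`-split of `X`. -/
def VirtualSplit (X : Set U) (G : SimpleGraph U) (A B : Set U) : Prop :=
  A.Nonempty ∧ B.Nonempty ∧ Disjoint A B ∧ A ∪ B = X ∧
    ∀ a ∈ A, ∀ a' ∈ A, ∀ b ∈ B, ∀ b' ∈ B, a ≠ a' → b ≠ b' → DisplaysBar G a a' b b'

/-- `G ≤ G'` (`G'` refines `G`), via the standard characterization
    `Q(T) ⊆ Q(T')` of refinement of `X`-trees. -/
def Refines (X : Set U) (G G' : SimpleGraph U) : Prop :=
  ∀ a a' b b' : U, QuartetOf X G a a' b b' → QuartetOf X G' a a' b b'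

/-- `L` is a weak lasso for (coralls) the `X`-tree `G`. -/
def WeakLasso (X : Set U) (G : SimpleGraph U) (L : Set (Sym2 U)) : Prop :=
  ∀ G' : SimpleGraph U, IsXTree X G' →
    ∀ ω ω' : Sym2 U → ℝ, IsProperWeighting G ω → IsProperWeighting G' ω' →
      LIso L G ω G' ω' → Refines X G G'

/-- The subgraph induced on a vertex set `A`. -/
def restrict {α : Type*} (Γ : SimpleGraph α) (A : Set α) : SimpleGraph α where
  Adj u v := Γ.Adj u v ∧ u ∈ A ∧ v ∈ A
  symm := by constructor; rintro u v ⟨h, hu, hv⟩; exact ⟨h.symm, hv, hu⟩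
  loopless := by constructor; rintro v ⟨h, _, _⟩; exact Γ.loopless.irrefl v h

/-- The restriction of `Γ` to `A` is a connected graph. -/
def ConnectedOn {α : Type*} (Γ : SimpleGraph α) (A : Set α) : Prop :=
  ∀ x ∈ A, ∀ y ∈ A, (restrict Γ A).Reachable x y

/-- The connected component of `x` in `Γ` is bipartite. -/
def ComponentBipartite {α : Type*} (Γ : SimpleGraph α) (x : α) : Prop :=
  ∃ f : α → Bool, ∀ u v : α, Γ.Reachable x u → Γ.Adj u v → f u ≠ f v

/-- No connected component (of the graph with vertex set `S`) is bipartite. -/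
def StronglyNonBipartite {α : Type*} (Γ : SimpleGraph α) (S : Set α) : Prop :=
  ∀ x ∈ S, ¬ ComponentBipartite Γ x

/-- The graph `Γ` is bipartite. -/
def Bipartite {α : Type*} (Γ : SimpleGraph α) : Prop :=
  ∃ f : α → Bool, ∀ u v : α, Γ.Adj u v → f u ≠ f v

/-- `E_v`: the set of edges of `G` containing `v`. -/
def Ev (G : SimpleGraph U) (v : U) : Set (Sym2 U) := {e | e ∈ G.edgeSet ∧ v ∈ e}

/-- The graph `G(L,v)` on the edge set `E_v`: two distinct edges at `v` are
    adjacent if some cord of `L` has both on its path. -/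
def covGraph (G : SimpleGraph U) (L : Set (Sym2 U)) (v : U) : SimpleGraph (Sym2 U) where
  Adj e e' := e ≠ e' ∧ e ∈ Ev G v ∧ e' ∈ Ev G v ∧
    ∃ x y : U, s(x, y) ∈ L ∧ e ∈ pathEdges G x y ∧ e' ∈ pathEdges G x y
  symm := by
    constructor; rintro e e' ⟨hne, he, he', x, y, hc, hp, hp'⟩
    exact ⟨hne.symm, he', he, x, y, hc, hp', hp⟩
  loopless := by constructor; rintro e ⟨hne, _⟩; exact hne rfl

/-- `G(L,v)` is the complete graph on `E_v`. -/
def CompleteAt (G : SimpleGraph U) (L : Set (Sym2 U)) (v : U) : Prop :=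
  ∀ e ∈ Ev G v, ∀ e' ∈ Ev G v, e ≠ e' → (covGraph G L v).Adj e e'

/-- `L` is a `t`-cover of `G`. -/
def TCover (X : Set U) (G : SimpleGraph U) (L : Set (Sym2 U)) : Prop :=
  cup L = X ∧ ∀ v : U, Interior G v → CompleteAt G L v

/-- The graph `Γ(L, c)` for the cord `c = x x'`, with vertex set `X − {x,x'}`
    and edge set `L^(c)`. -/
def cordGraphC (X : Set U) (G : SimpleGraph U) (L : Set (Sym2 U)) (x x' : U) :
    SimpleGraph U where
  Adj y y' := y ≠ y' ∧ y ≠ x ∧ y ≠ x' ∧ y' ≠ x ∧ y' ≠ x' ∧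
    s(y, y') ∈ L ∧ QuartetOf X G x x' y y' ∧
    ((s(x, y) ∈ L ∧ s(x', y') ∈ L) ∨ (s(x, y') ∈ L ∧ s(x', y) ∈ L))
  symm := by
    constructor; rintro y y' ⟨hne, h1, h2, h3, h4, hL,
      ⟨hx1, hx2, hy1, hy2, ⟨d1, d2, d3, d4, d5, d6⟩, e, p1, p2, p3, p4⟩, hor⟩
    exact ⟨hne.symm, h3, h4, h1, h2, by rwa [Sym2.eq_swap],
      ⟨hx1, hx2, hy2, hy1, ⟨d1, d3, d2, d5, d4, d6.symm⟩, e, p2, p1, p4, p3⟩, hor.symm⟩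
  loopless := by constructor; rintro y ⟨hne, _⟩; exact hne rfl

/-- `v` lies on the path of `G` from `x` to `y`. -/
def OnPath (G : SimpleGraph U) (x y v : U) : Prop :=
  v = x ∨ v = y ∨ ∃ e ∈ pathEdges G x y, v ∈ e

/-- `v = med_G(a,b,c)`: `v` lies on all three pairwise paths. -/
def IsMedian (G : SimpleGraph U) (a b c v : U) : Prop :=
  OnPath G a b v ∧ OnPath G a c v ∧ OnPath G b c v

/-- `L` is a triplet cover of `G`. -/
def TripletCover (X : Set U) (G : SimpleGraph U) (L : Set (Sym2 U)) : Prop :=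
  ∀ v : U, Interior G v → ∃ a b c : U, a ∈ X ∧ b ∈ X ∧ c ∈ X ∧
    a ≠ b ∧ a ≠ c ∧ b ≠ c ∧
    s(a, b) ∈ L ∧ s(a, c) ∈ L ∧ s(b, c) ∈ L ∧ IsMedian G a b c v

/-- `L` is a pointed `x`-cover of `G`. -/
def PointedCover (X : Set U) (G : SimpleGraph U) (L : Set (Sym2 U)) (x : U) : Prop :=
  cup L = X ∧ (∀ v : U, Interior G v → CompleteAt G L v) ∧
    ∀ v : U, Interior G v → ∃ a b : U, a ≠ b ∧
      s(a, x) ∈ L ∧ s(b, x) ∈ L ∧ IsMedian G a b x v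

/-- Every interior vertex has degree `3`. -/
def IsBinary (G : SimpleGraph U) : Prop := ∀ v : U, Interior G v → deg G v = 3

/-- `a, b` form a `T`-cherry with common neighbour `v`. -/
def IsCherry (G : SimpleGraph U) (a b v : U) : Prop :=
  a ≠ b ∧ IsLeaf G a ∧ IsLeaf G b ∧ G.Adj a v ∧ G.Adj b v

/-- `a, b` form a proper `T`-cherry with common neighbour `v` of degree `3`. -/
def IsProperCherry (G : SimpleGraph U) (a b v : U) : Prop :=
  IsCherry G a b v ∧ deg G v = 3

/-- `W` is a `T`-core of `G`. -/
def IsCore (G : SimpleGraph U) (W : Set U) : Prop :=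
  W.Nonempty ∧ W ⊆ G.support ∧
    (∀ a ∈ W, ∀ b ∈ W, (restrict G W).Reachable a b) ∧
    ∀ v ∈ W, deg (restrict G W) v = 1 ∨ deg (restrict G W) v = deg G v

/-- `X_W`: the leaf set of the induced tree `T_W`. -/
def coreLeaves (G : SimpleGraph U) (W : Set U) : Set U :=
  {v | v ∈ W ∧ deg (restrict G W) v = 1}

/-- `g` is the gate of `x` in `W`: the vertex of `W` closest to `x`. -/
def IsGate (G : SimpleGraph U) (W : Set U) (x g : U) : Prop :=
  g ∈ W ∧ ∀ w ∈ W, OnPath G x w g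

/-- `L_W`: the cords induced on the gates. -/
def gateCords (G : SimpleGraph U) (W : Set U) (L : Set (Sym2 U)) : Set (Sym2 U) :=
  {c | ∃ p q y y' : U, s(p, q) ∈ L ∧ IsGate G W p y ∧ IsGate G W q y' ∧
       y ≠ y' ∧ c = s(y, y')}

/-- The gate map of the cherry reduction: `a, b ↦ v`, all else fixed. -/
def cherryMap (a b v : U) : U → U := fun p => if p = a ∨ p = b then v else p

/-- `L_U` for the cherry reduction at the proper cherry `a,b` with neighbour `v`. -/
def cherryLU (L : Set (Sym2 U)) (a b v : U) : Set (Sym2 U) :=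
  {c | ∃ p q : U, s(p, q) ∈ L ∧ cherryMap a b v p ≠ cherryMap a b v q ∧
       c = s(cherryMap a b v p, cherryMap a b v q)}

/-- `X(a, L^{ab}) = {y : ay ∈ L − {ab}}`. -/
def sideSet (L : Set (Sym2 U)) (a b : U) : Set U :=
  {y | s(a, y) ∈ L ∧ s(a, y) ≠ s(a, b)}

/-- `Σ_{c ∈ LU} ρ(c)·λ^{TU}_c = 0` as a linear form on `ℝ^{E_U}`. -/
def RhoAnnihilates (TU : SimpleGraph U) (LU : Set (Sym2 U)) (ρ : Sym2 U → ℝ) : Prop :=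
  ∀ η : Sym2 U → ℝ, (∀ e, e ∉ TU.edgeSet → η e = 0) →
    ∑ᶠ c ∈ LU, ρ c * pdist TU η c = 0

/-- `D_ω(ab|cd)`. -/
def Dq (G : SimpleGraph U) (ω : Sym2 U → ℝ) (a b c d : U) : ℝ :=
  max (tdist G ω a c + tdist G ω b d) (tdist G ω a d + tdist G ω b c)
    - tdist G ω a b - tdist G ω c d

/-- The star tree on `X` with central vertex `z`. -/
def starGraph (X : Set U) (z : U) : SimpleGraph U :=
  SimpleGraph.fromEdgeSet {c | ∃ x ∈ X, c = s(x, z)}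

/-- `A ∨ B`: all cords with one end in `A` and the other in `B`. -/
def vee (A B : Set U) : Set (Sym2 U) := {c | ∃ a ∈ A, ∃ b ∈ B, c = s(a, b)}

/-- A `T`-shelling of `binom(X,2) − L` with cords `aᵢbᵢ` and pivots `pᵢ, qᵢ`. -/
def IsShelling (X : Set U) (G : SimpleGraph U) (L : Set (Sym2 U)) (m : ℕ)
    (a b p q : Fin m → U) : Prop :=
  (∀ i, a i ∈ X ∧ b i ∈ X ∧ a i ≠ b i ∧ s(a i, b i) ∉ L) ∧
  Function.Injective (fun i => s(a i, b i)) ∧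
  (∀ x y : U, x ∈ X → y ∈ X → x ≠ y → s(x, y) ∉ L → ∃ i, s(x, y) = s(a i, b i)) ∧
  ∀ i : Fin m,
    p i ∈ X ∧ q i ∈ X ∧ p i ≠ q i ∧
    p i ≠ a i ∧ p i ≠ b i ∧ q i ≠ a i ∧ q i ≠ b i ∧
    DisplaysQ G (a i) (p i) (b i) (q i) ∧
    ∀ u w : U, u ∈ ({a i, b i, p i, q i} : Set U) → w ∈ ({a i, b i, p i, q i} : Set U) →
      u ≠ w → s(u, w) ≠ s(a i, b i) →
      (s(u, w) ∈ L ∨ ∃ j : Fin m, j < i ∧ s(u, w) = s(a j, b j))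

/-- `L` is an `s`-lasso for `G`. -/
def SLasso (X : Set U) (G : SimpleGraph U) (L : Set (Sym2 U)) : Prop :=
  cup L = X ∧ ∃ (m : ℕ) (a b p q : Fin m → U), IsShelling X G L m a b p q

/-- `L'_{A,B}` of Corollary 3 (the cherry construction). -/
def LAB (L' : Set (Sym2 U)) (X : Set U) (a b : U) (A B : Set U) : Set (Sym2 U) :=
  {c | c ∈ L' ∧ ∀ u ∈ c, u ∈ X ∧ u ≠ a ∧ u ≠ b} ∪
  {c | ∃ x ∈ A ∪ {b}, c = s(a, x)} ∪
  {c | ∃ x ∈ B, c = s(b, x)}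

end Lasso

/-!
On the star tree `D_ω(x,y) = ω(xz) + ω(yz)`, so two weightings are `L`-isometric iff the
difference `d` of their values on pendant edges satisfies `d x + d y = 0` along every edge of
`Γ(L)`. Such a `d` has constant absolute value and alternating sign on each component, so it
vanishes on non-bipartite components. Conversely, `±1` on the two colour classes of a bipartite
component is such a `d` which is nonzero there, and perturbing a constant weighting by it gives a
second proper weighting that `L` cannot tell apart from the first.
-/

namespace Lasso

section Alternating

variable {α : Type*} (Γ : SimpleGraph α)

def IsAlternating (d : α → ℝ) : Prop :=
  ∀ ⦃u v : α⦄, Γ.Adj u v → d u + d v = 0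

variable {Γ}

theorem IsAlternating.abs_eq_of_reachable {d : α → ℝ} (hd : IsAlternating Γ d) {u v : α}
    (huv : Γ.Reachable u v) : |d u| = |d v| := by
  obtain ⟨p⟩ := huv
  induction p with
  | nil => rfl
  | cons h _ ih => rw [← ih, eq_neg_of_add_eq_zero_left (hd h), abs_neg]

theorem IsAlternating.eq_zero_of_not_componentBipartite {d : α → ℝ} (hd : IsAlternating Γ d)
    {x : α} (hx : ¬ ComponentBipartite Γ x) : d x = 0 := by
  by_contra hdx
  refine hx ⟨fun u => decide (0 < d u), fun u v hxu huv => ?_⟩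
  have hdu : d u ≠ 0 := by
    rw [← abs_ne_zero, ← hd.abs_eq_of_reachable hxu, abs_ne_zero]
    exact hdx
  have hdv : d v = -d u := eq_neg_of_add_eq_zero_right (hd huv)
  rcases hdu.lt_or_gt with hneg | hpos
  · simp [hdv, hneg, hneg.le]
  · simp [hdv, hpos, hpos.le]

theorem ComponentBipartite.exists_isAlternating {x : α} (hx : ComponentBipartite Γ x) :
    ∃ d : α → ℝ, IsAlternating Γ d ∧ (∀ u, |d u| ≤ 1) ∧ d x ≠ 0 := by
  obtain ⟨f, hf⟩ := hx
  refine ⟨fun u => if Γ.Reachable x u then (if f u then 1 else -1) else 0, ?_, ?_, ?_⟩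
  · intro u v huv
    by_cases hxu : Γ.Reachable x u
    · have hxv : Γ.Reachable x v := hxu.trans huv.reachable
      have hfuv := hf u v hxu huv
      cases hfu : f u <;> cases hfv : f v <;> simp_all
    · have hxv : ¬ Γ.Reachable x v := fun hxv => hxu (hxv.trans huv.symm.reachable)
      simp [hxu, hxv]
  · intro u
    dsimp only
    split_ifs <;> norm_num
  · simp only [SimpleGraph.Reachable.rfl, if_true]
    split_ifs <;> norm_num

end Alternating

section Star

variable {X : Set U} {z : U}

theorem IsCordSet.mem_and_mem_and_ne {L : Set (Sym2 U)} (hL : IsCordSet X L) {x y : U}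
    (hxy : s(x, y) ∈ L) : x ∈ X ∧ y ∈ X ∧ x ≠ y :=
  ⟨(hL _ hxy).2 _ (Sym2.mem_mk_left _ _), (hL _ hxy).2 _ (Sym2.mem_mk_right _ _),
    fun h => (hL _ hxy).1 (Sym2.mk_isDiag_iff.2 h)⟩

theorem mem_edgeSet_starGraph (hz : z ∉ X) {e : Sym2 U} :
    e ∈ (starGraph X z).edgeSet ↔ ∃ x ∈ X, e = s(x, z) := by
  rw [starGraph, SimpleGraph.edgeSet_fromEdgeSet, Set.mem_sdiff, Set.mem_ofPred_eq,
    and_iff_left_iff_imp]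
  rintro ⟨x, hx, rfl⟩
  simpa using fun h : x = z => hz (h ▸ hx)

theorem starGraph_adj_center (hz : z ∉ X) {x : U} (hx : x ∈ X) : (starGraph X z).Adj x z := by
  rw [← SimpleGraph.mem_edgeSet, mem_edgeSet_starGraph hz]
  exact ⟨x, hx, rfl⟩

theorem starGraph_adj_iff (hz : z ∉ X) {u v : U} :
    (starGraph X z).Adj u v ↔ (u ∈ X ∧ v = z) ∨ (u = z ∧ v ∈ X) := by
  rw [← SimpleGraph.mem_edgeSet, mem_edgeSet_starGraph hz]
  constructor
  · rintro ⟨x, hx, huv⟩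
    rcases Sym2.eq_iff.1 huv with ⟨rfl, rfl⟩ | ⟨rfl, rfl⟩
    exacts [Or.inl ⟨hx, rfl⟩, Or.inr ⟨rfl, hx⟩]
  · rintro (⟨hu, rfl⟩ | ⟨rfl, hv⟩)
    exacts [⟨u, hu, rfl⟩, ⟨v, hv, Sym2.eq_swap⟩]

theorem mem_edges_of_walk_starGraph (hz : z ∉ X) {a b : U} (ha : a ∈ X) (hab : a ≠ b)
    (p : (starGraph X z).Walk a b) : s(a, z) ∈ p.edges := by
  cases p with
  | nil => exact absurd rfl hab
  | @cons _ c _ h q =>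
    obtain rfl : c = z := by
      rcases (starGraph_adj_iff hz).1 h with ⟨_, rfl⟩ | ⟨rfl, _⟩
      · rfl
      · exact absurd ha hz
    simp

theorem pathEdges_starGraph (hz : z ∉ X) {a b : U} (ha : a ∈ X) (hb : b ∈ X) (hab : a ≠ b) :
    pathEdges (starGraph X z) a b = {s(a, z), s(b, z)} := by
  ext e
  constructor
  · rintro ⟨-, hall⟩
    simpa [Sym2.eq_swap] using
      hall (.cons (starGraph_adj_center hz ha) (.cons (starGraph_adj_center hz hb).symm .nil))
  · rintro (rfl | rfl)
    · exact ⟨starGraph_adj_center hz ha, mem_edges_of_walk_starGraph hz ha hab⟩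
    · refine ⟨starGraph_adj_center hz hb, fun p => ?_⟩
      simpa using mem_edges_of_walk_starGraph hz hb hab.symm p.reverse

theorem tdist_starGraph (hz : z ∉ X) {a b : U} (ha : a ∈ X) (hb : b ∈ X) (hab : a ≠ b)
    (ω : Sym2 U → ℝ) : tdist (starGraph X z) ω a b = ω s(a, z) + ω s(b, z) := by
  rw [tdist, pathEdges_starGraph hz ha hb hab, finsum_mem_pair]
  rw [Ne, Sym2.eq_iff]
  rintro (⟨h, -⟩ | ⟨h, -⟩)
  exacts [hab h, hz (h ▸ ha)]

theorem liso_starGraph_iff_isAlternating (hz : z ∉ X) {L : Set (Sym2 U)} (hL : IsCordSet X L)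
    (ω ω' : Sym2 U → ℝ) :
    LIso L (starGraph X z) ω (starGraph X z) ω' ↔
      IsAlternating (SimpleGraph.fromEdgeSet L) (fun u => ω s(u, z) - ω' s(u, z)) := by
  constructor
  · intro hiso x y hxy
    rw [SimpleGraph.fromEdgeSet_adj] at hxy
    obtain ⟨hx, hy, hne⟩ := hL.mem_and_mem_and_ne hxy.1
    have := hiso x y hxy.1
    rw [tdist_starGraph hz hx hy hne, tdist_starGraph hz hx hy hne] at this
    linarith
  · intro halt x y hxy
    obtain ⟨hx, hy, hne⟩ := hL.mem_and_mem_and_ne hxy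
    have := halt ((SimpleGraph.fromEdgeSet_adj _).2 ⟨hxy, hne⟩)
    rw [tdist_starGraph hz hx hy hne, tdist_starGraph hz hx hy hne]
    linarith

theorem IsWeighting.ext_starGraph (hz : z ∉ X) {ω ω' : Sym2 U → ℝ}
    (hω : IsWeighting (starGraph X z) ω) (hω' : IsWeighting (starGraph X z) ω')
    (h : ∀ x ∈ X, ω s(x, z) = ω' s(x, z)) : ω = ω' := by
  funext e
  by_cases he : e ∈ (starGraph X z).edgeSet
  · obtain ⟨x, hx, rfl⟩ := (mem_edgeSet_starGraph hz).1 he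
    exact h x hx
  · rw [hω.zero_off e he, hω'.zero_off e he]

/-- Weight `g x` on the pendant edge `xz`: the `z`-summand of the lift vanishes as `z ∉ X`. -/
def starWeighting (X : Set U) (z : U) (g : U → ℝ) : Sym2 U → ℝ :=
  (starGraph X z).edgeSet.indicator
    (Sym2.lift ⟨fun u v => X.indicator g u + X.indicator g v, fun _ _ => add_comm _ _⟩)

theorem starWeighting_apply (hz : z ∉ X) (g : U → ℝ) {x : U} (hx : x ∈ X) :
    starWeighting X z g s(x, z) = g x := by
  have hxz : s(x, z) ∈ (starGraph X z).edgeSet := starGraph_adj_center hz hx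
  rw [starWeighting, Set.indicator_of_mem hxz]
  simp [hx, hz]

theorem isProperWeighting_starWeighting (hz : z ∉ X) {g : U → ℝ} (hg : ∀ x ∈ X, 0 < g x) :
    IsProperWeighting (starGraph X z) (starWeighting X z g) := by
  have hpos : ∀ e ∈ (starGraph X z).edgeSet, 0 < starWeighting X z g e := by
    intro e he
    obtain ⟨x, hx, rfl⟩ := (mem_edgeSet_starGraph hz).1 he
    rw [starWeighting_apply hz g hx]
    exact hg x hx
  refine ⟨⟨fun e => ?_, fun e he => Set.indicator_of_notMem he _⟩, fun e he _ => hpos e he⟩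
  by_cases he : e ∈ (starGraph X z).edgeSet
  · exact (hpos e he).le
  · exact (Set.indicator_of_notMem he _).ge

end Star

theorem star_edgeWeightLasso_iff_stronglyNonBipartite_general {U : Type}
    (X : Set U) (z : U) (hz : z ∉ X)
    (L : Set (Sym2 U)) (hL : IsCordSet X L) :
    EdgeWeightLasso (starGraph X z) L ↔
      StronglyNonBipartite (SimpleGraph.fromEdgeSet L) X := by
  constructor
  · intro hlasso x hx hbip
    obtain ⟨d, hd, hd1, hdx⟩ := hbip.exists_isAlternating
    have hpos : ∀ u ∈ X, 0 < 2 + d u := fun u _ => by linarith [neg_abs_le (d u), hd1 u]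
    have hiso : LIso L (starGraph X z) (starWeighting X z (2 + d)) (starGraph X z)
        (starWeighting X z 2) := by
      rw [liso_starGraph_iff_isAlternating hz hL]
      intro u v huv
      obtain ⟨hu, hv, -⟩ := hL.mem_and_mem_and_ne ((SimpleGraph.fromEdgeSet_adj _).1 huv).1
      simp only [starWeighting_apply hz _ hu, starWeighting_apply hz _ hv, Pi.add_apply]
      linarith [hd huv]
    have hω := congrFun (hlasso _ _ (isProperWeighting_starWeighting hz hpos)
      (isProperWeighting_starWeighting hz fun _ _ => two_pos) hiso) s(x, z)
    rw [starWeighting_apply hz _ hx, starWeighting_apply hz _ hx] at hω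
    exact hdx (by simpa using hω)
  · intro hsnb ω ω' hω hω' hiso
    have hd := (liso_starGraph_iff_isAlternating hz hL ω ω').1 hiso
    refine hω.toIsWeighting.ext_starGraph hz hω'.toIsWeighting fun x hx => ?_
    exact sub_eq_zero.1 (hd.eq_zero_of_not_componentBipartite (hsnb x hx))

/-- For the star tree `T*` on `X` (`|X| = n ≥ 3`, central vertex `z ∉ X`):
a set `L` of cords with `X = ⋃ L` is an edge-weight lasso for `T*` iff `L`
is strongly non-bipartite. -/
theorem star_edgeWeightLasso_iff_stronglyNonBipartite {U : Type}
    (X : Set U) (z : U) (hz : z ∉ X)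
    (hXfin : X.Finite) (hX3 : 3 ≤ X.ncard)
    (L : Set (Sym2 U)) (hL : IsCordSet X L) (hcup : cup L = X) :
    EdgeWeightLasso (starGraph X z) L ↔
      StronglyNonBipartite (SimpleGraph.fromEdgeSet L) X :=
  star_edgeWeightLasso_iff_stronglyNonBipartite_general X z hz L hL

end Lasso
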